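/- arXiv:1804.04615 — 5 statements merged into one kernel-verified Lean document; each statement's English description precedes it below -/
import Mathlib

section
/- Let (Λ_ω)_{ω∈Ω} be a cg-orthonormal system for H with respect to (H_ω)_{ω∈Ω} such that ∫_Ω ‖Λ_ω h‖² dμ(ω) < ∞ for every h ∈ H. If for every μ-null set Ω₀ ⊆ Ω the closed linear span of ⋃_{ω ∈ Ω∖Ω₀} Λ_ω*(H_ω) equals H, then ⟨h, k⟩ = ∫_Ω ⟨Λ_ω h, Λ_ω k⟩ dμ(ω) for all h, k ∈ H. -/
/-!
Fix `h`. By the orthonormality relation applied to `f ω = Λ ω h`, the linear functional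
`k ↦ ∫ ⟪Λ ω h, Λ ω k⟫ dμ` agrees with `⟪h, ·⟫` on `Λ_ν* (H_ν)` for almost every `ν`, a set whose
span is dense. It is continuous: by Fatou's lemma `k ↦ ‖ω ↦ ‖Λ ω k‖‖_{L²}` is a lower
semicontinuous seminorm on the Banach space `H`, hence (Baire) continuous and `≤ C ‖k‖`,
and Cauchy–Schwarz in `L²` bounds the functional by it. So the two functionals coincide.
-/

open MeasureTheory

noncomputable section

variable {Ω : Type*} [MeasurableSpace Ω]
variable {H : Type*} [NormedAddCommGroup H] [InnerProductSpace ℂ H] [CompleteSpace H]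
  [TopologicalSpace.SeparableSpace H]
variable {G : Ω → Type*} [∀ ω, NormedAddCommGroup (G ω)] [∀ ω, InnerProductSpace ℂ (G ω)]
  [∀ ω, CompleteSpace (G ω)]

/-- Condition (i): for all `h k`, the function `ω ↦ ⟨Λ ω h, Λ ω k⟩` is measurable. -/
def CgMeasurable (μ : Measure Ω) (Λ : ∀ ω, H →L[ℂ] G ω) : Prop :=
  ∀ h k : H, Measurable fun ω => (inner ℂ (Λ ω h) (Λ ω k) : ℂ)

/-- Condition (ii): the orthonormality relation for the adjoints. -/
def CgOrthoCondition (μ : Measure Ω) (Λ : ∀ ω, H →L[ℂ] G ω) : Prop :=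
  ∀ᵐ ν ∂μ, ∀ g : G ν, ∀ f : ∀ ω, G ω,
    Integrable (fun ω => ‖f ω‖ ^ 2) μ →
    Integrable (fun ω =>
      (inner ℂ (ContinuousLinearMap.adjoint (Λ ω) (f ω))
        (ContinuousLinearMap.adjoint (Λ ν) g) : ℂ)) μ →
    ∫ ω, (inner ℂ (ContinuousLinearMap.adjoint (Λ ω) (f ω))
        (ContinuousLinearMap.adjoint (Λ ν) g) : ℂ) ∂μ = (inner ℂ (f ν) g : ℂ)

/-- A `cg`-orthonormal system: conditions (i) and (ii). -/
def IsCgOrthonormalSystem (μ : Measure Ω) (Λ : ∀ ω, H →L[ℂ] G ω) : Prop :=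
  CgMeasurable μ Λ ∧ CgOrthoCondition μ Λ

/-- A `cg`-orthonormal basis: conditions (i), (ii) and (iii). -/
def IsCgOrthonormalBasis (μ : Measure Ω) (Λ : ∀ ω, H →L[ℂ] G ω) : Prop :=
  IsCgOrthonormalSystem μ Λ ∧
    ∀ h : H, Integrable (fun ω => ‖Λ ω h‖ ^ 2) μ ∧ ∫ ω, ‖Λ ω h‖ ^ 2 ∂μ = ‖h‖ ^ 2

/-- A `cg`-frame with bounds `A` and `B`. -/
def IsCgFrameWith (μ : Measure Ω) (Λ : ∀ ω, H →L[ℂ] G ω) (A B : ℝ) : Prop :=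
  CgMeasurable μ Λ ∧
    ∀ h : H, Integrable (fun ω => ‖Λ ω h‖ ^ 2) μ ∧
      A * ‖h‖ ^ 2 ≤ ∫ ω, ‖Λ ω h‖ ^ 2 ∂μ ∧ ∫ ω, ‖Λ ω h‖ ^ 2 ∂μ ≤ B * ‖h‖ ^ 2

/-- A `cg`-frame (with some bounds `0 < A ≤ B`). -/
def IsCgFrame (μ : Measure Ω) (Λ : ∀ ω, H →L[ℂ] G ω) : Prop :=
  ∃ A B : ℝ, 0 < A ∧ A ≤ B ∧ IsCgFrameWith μ Λ A B

/-- A `cg`-Bessel family with Bessel bound `B`. -/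
def IsCgBessel (μ : Measure Ω) (Λ : ∀ ω, H →L[ℂ] G ω) (B : ℝ) : Prop :=
  CgMeasurable μ Λ ∧
    ∀ h : H, Integrable (fun ω => ‖Λ ω h‖ ^ 2) μ ∧ ∫ ω, ‖Λ ω h‖ ^ 2 ∂μ ≤ B * ‖h‖ ^ 2

/-- A tight `cg`-frame with frame bound `A`. -/
def IsTightCgFrame (μ : Measure Ω) (Λ : ∀ ω, H →L[ℂ] G ω) (A : ℝ) : Prop :=
  CgMeasurable μ Λ ∧
    ∀ h : H, Integrable (fun ω => ‖Λ ω h‖ ^ 2) μ ∧ ∫ ω, ‖Λ ω h‖ ^ 2 ∂μ = A * ‖h‖ ^ 2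

/-- A Parseval `cg`-frame. -/
def IsParsevalCgFrame (μ : Measure Ω) (Λ : ∀ ω, H →L[ℂ] G ω) : Prop :=
  CgMeasurable μ Λ ∧
    ∀ h : H, Integrable (fun ω => ‖Λ ω h‖ ^ 2) μ ∧ ∫ ω, ‖Λ ω h‖ ^ 2 ∂μ = ‖h‖ ^ 2

/-- A `cg`-complete family. -/
def CgComplete (μ : Measure Ω) (Λ : ∀ ω, H →L[ℂ] G ω) : Prop :=
  ∀ h : H, (∀ᵐ ω ∂μ, Λ ω h = 0) → h = 0

open Filter Topology
open scoped ENNReal InnerProductSpace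
open ContinuousLinearMap (adjoint adjoint_inner_left adjoint_inner_right)

theorem LowerSemicontinuous.ennreal_toReal {X : Type*} [TopologicalSpace X] {f : X → ℝ≥0∞}
    (hf : LowerSemicontinuous f) (hfin : ∀ x, f x ≠ ∞) :
    LowerSemicontinuous fun x => (f x).toReal := by
  intro x y hy
  rcases lt_or_ge y 0 with hy0 | hy0
  · exact Eventually.of_forall fun _ => hy0.trans_le ENNReal.toReal_nonneg
  · filter_upwards [hf x _ ((ENNReal.ofReal_lt_iff_lt_toReal hy0 (hfin x)).2 hy)] with x' hx'
    exact (ENNReal.ofReal_lt_iff_lt_toReal hy0 (hfin x')).1 hx'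

theorem lowerSemicontinuous_lintegral {α X : Type*} [MeasurableSpace α] {μ : Measure α}
    [TopologicalSpace X] [FirstCountableTopology X] {F : X → α → ℝ≥0∞}
    (hmeas : ∀ x, AEMeasurable (F x) μ) (hF : ∀ a, LowerSemicontinuous fun x => F x a) :
    LowerSemicontinuous fun x => ∫⁻ a, F x a ∂μ :=
  lowerSemicontinuous_iff_le_liminf.2 fun x =>
    calc ∫⁻ a, F x a ∂μ ≤ ∫⁻ a, liminf (fun y => F y a) (𝓝 x) ∂μ :=
          lintegral_mono fun a => (hF a).le_liminf x
      _ ≤ liminf (fun y => ∫⁻ a, F y a ∂μ) (𝓝 x) := lintegral_liminf_le' hmeas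

section L2Seminorm

variable {α : Type*} [MeasurableSpace α] {μ : Measure α} {𝕜 E : Type*}
  [NontriviallyNormedField 𝕜] [NormedAddCommGroup E] [NormedSpace 𝕜 E]
  {F : α → Type*} [∀ a, NormedAddCommGroup (F a)] [∀ a, NormedSpace 𝕜 (F a)]
  {T : ∀ a, E →L[𝕜] F a}

def l2Seminorm (hT : ∀ x, MemLp (fun a => ‖T a x‖) 2 μ) : Seminorm 𝕜 E :=
  Seminorm.of (fun x => (eLpNorm (fun a => ‖T a x‖) 2 μ).toReal)
    (fun x y => by
      refine (ENNReal.toReal_mono (ENNReal.add_ne_top.2 ⟨(hT x).2.ne, (hT y).2.ne⟩) ?_).trans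
        ENNReal.toReal_add_le
      calc eLpNorm (fun a => ‖T a (x + y)‖) 2 μ
          ≤ eLpNorm ((fun a => ‖T a x‖) + fun a => ‖T a y‖) 2 μ :=
            eLpNorm_mono_real fun a => by
              simpa using norm_add_le (T a x) (T a y)
        _ ≤ _ := eLpNorm_add_le (hT x).1 (hT y).1 one_le_two)
    (fun c x => by
      have hsmul : (fun a => ‖T a (c • x)‖) = ‖c‖ • fun a => ‖T a x‖ := by
        ext a; simp [norm_smul]
      simp only [hsmul, eLpNorm_const_smul, enorm_norm, ENNReal.toReal_mul, toReal_enorm])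

theorem l2Seminorm_apply (hT : ∀ x, MemLp (fun a => ‖T a x‖) 2 μ) (x : E) :
    l2Seminorm hT x = (eLpNorm (fun a => ‖T a x‖) 2 μ).toReal := rfl

theorem lowerSemicontinuous_l2Seminorm (hT : ∀ x, MemLp (fun a => ‖T a x‖) 2 μ) :
    LowerSemicontinuous (l2Seminorm hT) := by
  refine LowerSemicontinuous.ennreal_toReal ?_ fun x => (hT x).2.ne
  simp_rw [eLpNorm_eq_lintegral_rpow_enorm_toReal two_ne_zero ENNReal.ofNat_ne_top]
  refine (ENNReal.continuous_rpow_const.comp_lowerSemicontinuous ?_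
    fun _ _ h => ENNReal.rpow_le_rpow h (by positivity))
  refine lowerSemicontinuous_lintegral (fun x => (hT x).1.enorm.pow_const _) fun a => ?_
  exact ((ENNReal.continuous_rpow_const.comp (T a).continuous.norm.enorm)).lowerSemicontinuous

theorem continuous_l2Seminorm [CompleteSpace E] (hT : ∀ x, MemLp (fun a => ‖T a x‖) 2 μ) :
    Continuous (l2Seminorm hT) :=
  (l2Seminorm hT).continuous_of_lowerSemicontinuous (lowerSemicontinuous_l2Seminorm hT)

end L2Seminorm

section IntegralInner

variable {α : Type*} [MeasurableSpace α] {μ : Measure α} {𝕜 E : Type*} [RCLike 𝕜]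
  [NormedAddCommGroup E] [NormedSpace 𝕜 E]
  {F : α → Type*} [∀ a, NormedAddCommGroup (F a)] [∀ a, InnerProductSpace 𝕜 (F a)]
  {T : ∀ a, E →L[𝕜] F a}

theorem memLp_norm_apply (hmeas : ∀ x y, AEStronglyMeasurable (fun a => ⟪T a x, T a y⟫_𝕜) μ)
    (hint : ∀ x, Integrable (fun a => ‖T a x‖ ^ 2) μ) (x : E) :
    MemLp (fun a => ‖T a x‖) 2 μ := by
  have hnorm : (fun a => ‖T a x‖) = fun a => √(RCLike.re ⟪T a x, T a x⟫_𝕜) := by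
    ext a; exact norm_eq_sqrt_re_inner _
  refine (memLp_two_iff_integrable_sq ?_).2 (hint x)
  rw [hnorm]
  exact Real.continuous_sqrt.comp_aestronglyMeasurable
    (RCLike.continuous_re.comp_aestronglyMeasurable (hmeas x x))

theorem integrable_inner_apply
    (hmeas : ∀ x y, AEStronglyMeasurable (fun a => ⟪T a x, T a y⟫_𝕜) μ)
    (hT : ∀ x, MemLp (fun a => ‖T a x‖) 2 μ) (x y : E) :
    Integrable (fun a => ⟪T a x, T a y⟫_𝕜) μ :=
  ((hT x).integrable_mul (hT y)).mono' (hmeas x y)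
    (Eventually.of_forall fun _ => norm_inner_le_norm _ _)

theorem norm_integral_inner_apply_le (hT : ∀ x, MemLp (fun a => ‖T a x‖) 2 μ) (x y : E) :
    ‖∫ a, ⟪T a x, T a y⟫_𝕜 ∂μ‖ ≤ l2Seminorm hT x * l2Seminorm hT y := by
  have hHolder : eLpNorm (fun a => ⟪T a x, T a y⟫_𝕜) 1 μ
      ≤ eLpNorm (fun a => ‖T a x‖) 2 μ * eLpNorm (fun a => ‖T a y‖) 2 μ :=
    calc eLpNorm (fun a => ⟪T a x, T a y⟫_𝕜) 1 μ
        ≤ eLpNorm (fun a => ‖T a x‖ * ‖T a y‖) 1 μ :=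
          eLpNorm_mono_real fun a => norm_inner_le_norm _ _
      _ ≤ _ := by
          simpa using eLpNorm_le_eLpNorm_mul_eLpNorm'_of_norm (r := 1) (hT x).1 (hT y).1
            (· * ·) 1 (Eventually.of_forall fun a => by simp)
  calc ‖∫ a, ⟪T a x, T a y⟫_𝕜 ∂μ‖
      ≤ (∫⁻ a, ENNReal.ofReal ‖⟪T a x, T a y⟫_𝕜‖ ∂μ).toReal := norm_integral_le_lintegral_norm _
    _ = (eLpNorm (fun a => ⟪T a x, T a y⟫_𝕜) 1 μ).toReal := by
      simp_rw [eLpNorm_one_eq_lintegral_enorm, ofReal_norm]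
    _ ≤ l2Seminorm hT x * l2Seminorm hT y := by
      rw [l2Seminorm_apply, l2Seminorm_apply, ← ENNReal.toReal_mul]
      exact ENNReal.toReal_mono (ENNReal.mul_ne_top (hT x).2.ne (hT y).2.ne) hHolder

theorem exists_norm_integral_inner_apply_le [CompleteSpace E]
    (hT : ∀ x, MemLp (fun a => ‖T a x‖) 2 μ) :
    ∃ C, ∀ x y, ‖∫ a, ⟪T a x, T a y⟫_𝕜 ∂μ‖ ≤ C * ‖x‖ * ‖y‖ := by
  obtain ⟨C, -, hC⟩ := Seminorm.bound_of_continuous_normedSpace _ (continuous_l2Seminorm hT)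
  refine ⟨C * C, fun x y => (norm_integral_inner_apply_le hT x y).trans ?_⟩
  calc l2Seminorm hT x * l2Seminorm hT y ≤ (C * ‖x‖) * (C * ‖y‖) :=
        mul_le_mul (hC x) (hC y) (apply_nonneg _ _) ((apply_nonneg _ _).trans (hC x))
    _ = C * C * ‖x‖ * ‖y‖ := by ring

def integralInnerRight (x : E) (hint : ∀ y, Integrable (fun a => ⟪T a x, T a y⟫_𝕜) μ) :
    E →ₗ[𝕜] 𝕜 where
  toFun y := ∫ a, ⟪T a x, T a y⟫_𝕜 ∂μ
  map_add' y z := by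
    simp only [map_add, inner_add_right]
    exact integral_add (hint y) (hint z)
  map_smul' c y := by
    simp only [map_smul, inner_smul_right, RingHom.id_apply, smul_eq_mul]
    exact integral_const_mul c _

end IntegralInner

theorem stmt_3 (μ : Measure Ω) (Λ : ∀ ω, H →L[ℂ] G ω)
    (hsys : IsCgOrthonormalSystem μ Λ)
    (hint : ∀ h : H, Integrable (fun ω => ‖Λ ω h‖ ^ 2) μ)
    (hspan : ∀ Ω₀ : Set Ω, μ Ω₀ = 0 →
      (Submodule.span ℂ
        (⋃ ω ∈ Ω₀ᶜ, Set.range (⇑(ContinuousLinearMap.adjoint (Λ ω))))).topologicalClosure = ⊤) :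
    ∀ h k : H, (inner ℂ h k : ℂ) = ∫ ω, (inner ℂ (Λ ω h) (Λ ω k) : ℂ) ∂μ := by
  obtain ⟨hmeas, hortho⟩ := hsys
  have hmeas' h k := (hmeas h k).aestronglyMeasurable (μ := μ)
  have hT := memLp_norm_apply hmeas' hint
  have hip := integrable_inner_apply hmeas' hT
  obtain ⟨C, hC⟩ := exists_norm_integral_inner_apply_le hT
  have hae : ∀ᵐ ν ∂μ, ∀ (h : H) (g : G ν),
      ∫ ω, ⟪Λ ω h, Λ ω (adjoint (Λ ν) g)⟫_ℂ ∂μ = ⟪h, adjoint (Λ ν) g⟫_ℂ := by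
    filter_upwards [hortho] with ν hν h g
    rw [adjoint_inner_right]
    simpa only [adjoint_inner_left] using
      hν g (fun ω => Λ ω h) (hint h) (by simpa only [adjoint_inner_left] using hip h _)
  have hdense := Submodule.dense_iff_topologicalClosure_eq_top.2 (hspan _ (ae_iff.1 hae))
  intro h k
  have hL : (integralInnerRight h (hip h)).mkContinuous (C * ‖h‖) (hC h) = innerSL ℂ h := by
    refine ContinuousLinearMap.ext_on hdense ?_
    intro x hx
    simp only [Set.mem_iUnion, Set.mem_compl_iff, Set.mem_ofPred_eq, not_not,
      Set.mem_range] at hx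
    obtain ⟨ν, hν, g, rfl⟩ := hx
    exact hν h g
  exact (DFunLike.congr_fun hL k).symm
end
end

section
/- Let (Λ_ω)_{ω∈Ω} be a cg-orthonormal basis for H with respect to (H_ω)_{ω∈Ω} and let V ∈ B(H) be a bounded linear operator. Then the family (Λ_ω ∘ V)_{ω∈Ω} is a cg-orthonormal basis for H with respect to (H_ω)_{ω∈Ω} if and only if V is unitary. -/
/-!
Composing with `V` replaces `Λ_ω*` by `V* Λ_ω*`, and `⟨V* a, V* b⟩ = ⟨a, V V* b⟩`, so a unitary `V`
leaves conditions (ii) and (iii) untouched. Conversely, (iii) for `Λ ∘ V` makes `V` an isometry,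
`V* V = I`. If moreover `V* x = 0`, test (ii) for `Λ ∘ V` at `ν` against `f_ω = Λ_ω x` and
`g = Λ_ν x`: the polarised Parseval identity `∫ ⟨Λ_ω x, Λ_ω y⟩ = ⟨x, y⟩` evaluates the left side
to `⟨x, V V* Λ_ν* g⟩ = ⟨V* x, V* Λ_ν* g⟩ = 0`, so `Λ_ν x = 0` for a.e. `ν` and `x = 0` by (iii).
Hence `V*` is injective, and `V V* = I`.
-/

open MeasureTheory

noncomputable section

variable {Ω : Type*} [MeasurableSpace Ω]
variable {H : Type*} [NormedAddCommGroup H] [InnerProductSpace ℂ H] [CompleteSpace H]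
  [TopologicalSpace.SeparableSpace H]
variable {G : Ω → Type*} [∀ ω, NormedAddCommGroup (G ω)] [∀ ω, InnerProductSpace ℂ (G ω)]
  [∀ ω, CompleteSpace (G ω)]

open scoped InnerProductSpace

open ContinuousLinearMap

section Parseval

variable {𝕜 : Type*} [RCLike 𝕜] {E : Type*} [NormedAddCommGroup E] [InnerProductSpace 𝕜 E]
  {E' : Type*} [NormedAddCommGroup E'] [InnerProductSpace 𝕜 E']
  {F : Ω → Type*} [∀ ω, NormedAddCommGroup (F ω)] [∀ ω, InnerProductSpace 𝕜 (F ω)]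
  {μ : Measure Ω} {Λ : ∀ ω, E →L[𝕜] F ω}

/-- Condition (iii) of a cg-orthonormal basis. -/
def CgParseval (μ : Measure Ω) (Λ : ∀ ω, E →L[𝕜] F ω) : Prop :=
  ∀ h : E, Integrable (fun ω => ‖Λ ω h‖ ^ 2) μ ∧ ∫ ω, ‖Λ ω h‖ ^ 2 ∂μ = ‖h‖ ^ 2

theorem ContinuousLinearMap.inner_map_map_eq_polarization {F' : Type*} [NormedAddCommGroup F']
    [InnerProductSpace 𝕜 F'] (T : E →L[𝕜] F') (x y : E) :
    ⟪T x, T y⟫_𝕜 = ((‖T (x + y)‖ : 𝕜) ^ 2 - (‖T (x - y)‖ : 𝕜) ^ 2 +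
      ((‖T (x - (RCLike.I : 𝕜) • y)‖ : 𝕜) ^ 2 - (‖T (x + (RCLike.I : 𝕜) • y)‖ : 𝕜) ^ 2) *
        RCLike.I) / 4 := by
  rw [inner_eq_sum_norm_sq_div_four, map_add, map_sub, map_sub, map_add, map_smul]

theorem integrable_ofReal_norm_apply_sq (h : ∀ x, Integrable (fun ω => ‖Λ ω x‖ ^ 2) μ) (x : E) :
    Integrable (fun ω => (‖Λ ω x‖ : 𝕜) ^ 2) μ := by
  simpa only [RCLike.ofReal_pow] using (h x).ofReal (𝕜 := 𝕜)

theorem integrable_inner_apply_of_integrable_norm_sq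
    (h : ∀ x, Integrable (fun ω => ‖Λ ω x‖ ^ 2) μ) (x y : E) :
    Integrable (fun ω => ⟪Λ ω x, Λ ω y⟫_𝕜) μ := by
  have hN := integrable_ofReal_norm_apply_sq h
  simp_rw [inner_map_map_eq_polarization]
  exact (((hN _).sub (hN _)).add (((hN _).sub (hN _)).mul_const _)).div_const _

theorem CgParseval.integral_inner (hP : CgParseval μ Λ) (x y : E) :
    ∫ ω, ⟪Λ ω x, Λ ω y⟫_𝕜 ∂μ = ⟪x, y⟫_𝕜 := by
  have hN := integrable_ofReal_norm_apply_sq fun z => (hP z).1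
  have hN' (z : E) : ∫ ω, (‖Λ ω z‖ : 𝕜) ^ 2 ∂μ = (‖z‖ : 𝕜) ^ 2 := by
    simp_rw [← RCLike.ofReal_pow]
    rw [integral_ofReal, (hP z).2]
  simp_rw [inner_map_map_eq_polarization, inner_eq_sum_norm_sq_div_four x y]
  rw [integral_div, integral_add, integral_mul_const, integral_sub, integral_sub,
    hN', hN', hN', hN']
  all_goals fun_prop (disch := exact hN _)

theorem CgParseval.comp (hP : CgParseval μ Λ) {V : E' →L[𝕜] E}
    (hV : ∀ h, ‖V h‖ = ‖h‖) :
    CgParseval μ fun ω => (Λ ω).comp V := fun h => by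
  simpa only [comp_apply, hV] using hP (V h)

theorem CgParseval.norm_map_of_comp (hP : CgParseval μ Λ) {V : E' →L[𝕜] E}
    (hPV : CgParseval μ fun ω => (Λ ω).comp V) (h : E') : ‖V h‖ = ‖h‖ := by
  have hsq : ‖V h‖ ^ 2 = ‖h‖ ^ 2 := by
    rw [← (hP (V h)).2, ← (hPV h).2]
    rfl
  exact (sq_eq_sq₀ (norm_nonneg _) (norm_nonneg _)).mp hsq

end Parseval

section Composition

variable {E : Type*} [NormedAddCommGroup E] [InnerProductSpace ℂ E]
  {E' : Type*} [NormedAddCommGroup E'] [InnerProductSpace ℂ E']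
  {F : Ω → Type*} [∀ ω, NormedAddCommGroup (F ω)] [∀ ω, InnerProductSpace ℂ (F ω)]
  {μ : Measure Ω} {Λ : ∀ ω, E →L[ℂ] F ω}

theorem CgMeasurable.comp (hm : CgMeasurable μ Λ) (V : E' →L[ℂ] E) :
    CgMeasurable μ fun ω => (Λ ω).comp V :=
  fun h k => hm (V h) (V k)

theorem CgParseval.cgComplete (hP : CgParseval μ Λ) : CgComplete μ Λ := by
  intro h hzero
  have hint : ∫ ω, ‖Λ ω h‖ ^ 2 ∂μ = 0 := by
    rw [integral_eq_zero_of_ae]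
    filter_upwards [hzero] with ω hω
    simp [hω]
  rw [(hP h).2] at hint
  exact norm_eq_zero.mp (pow_eq_zero_iff two_ne_zero |>.mp hint)

variable [CompleteSpace E] [CompleteSpace E'] [∀ ω, CompleteSpace (F ω)] {V : E' →L[ℂ] E}

theorem inner_adjoint_comp_adjoint_comp {K K' : Type*} [NormedAddCommGroup K]
    [InnerProductSpace ℂ K] [CompleteSpace K] [NormedAddCommGroup K'] [InnerProductSpace ℂ K']
    [CompleteSpace K'] (A : E →L[ℂ] K) (B : E →L[ℂ] K') (a : K) (b : K') :
    ⟪adjoint (A ∘L V) a, adjoint (B ∘L V) b⟫_ℂ =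
      ⟪adjoint A a, V (adjoint V (adjoint B b))⟫_ℂ := by
  rw [adjoint_comp, adjoint_comp, comp_apply, comp_apply, adjoint_inner_left]

theorem CgOrthoCondition.comp_of_comp_adjoint_eq_id (ho : CgOrthoCondition μ Λ)
    (hV : V ∘L adjoint V = ContinuousLinearMap.id ℂ E) :
    CgOrthoCondition μ fun ω => (Λ ω).comp V := by
  have key (ν ω : Ω) (a : F ω) (b : F ν) :
      ⟪adjoint ((Λ ω).comp V) a, adjoint ((Λ ν).comp V) b⟫_ℂ =
        ⟪adjoint (Λ ω) a, adjoint (Λ ν) b⟫_ℂ := by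
    rw [inner_adjoint_comp_adjoint_comp, ← comp_apply V, hV, id_apply]
  filter_upwards [ho] with ν hν g f hf
  simp_rw [key]
  exact hν g f hf

theorem CgParseval.ae_apply_eq_zero_of_adjoint_eq_zero (hP : CgParseval μ Λ)
    (ho : CgOrthoCondition μ fun ω => (Λ ω).comp V) {x : E} (hx : adjoint V x = 0) :
    ∀ᵐ ν ∂μ, Λ ν x = 0 := by
  filter_upwards [ho] with ν hν
  set y := V (adjoint V (adjoint (Λ ν) (Λ ν x)))
  have key (ω : Ω) :
      ⟪adjoint ((Λ ω).comp V) (Λ ω x), adjoint ((Λ ν).comp V) (Λ ν x)⟫_ℂ =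
        ⟪Λ ω x, Λ ω y⟫_ℂ := by
    rw [inner_adjoint_comp_adjoint_comp, adjoint_inner_left]
  have h0 := hν (Λ ν x) (fun ω => Λ ω x) (hP x).1
    (by simpa only [key] using integrable_inner_apply_of_integrable_norm_sq (fun z => (hP z).1) x y)
  simp_rw [key, hP.integral_inner] at h0
  rw [← adjoint_inner_left, hx, inner_zero_left] at h0
  exact inner_self_eq_zero.mp h0.symm

end Composition

theorem stmt_6 (μ : Measure Ω) (Λ : ∀ ω, H →L[ℂ] G ω)
    (hΛ : IsCgOrthonormalBasis μ Λ) (V : H →L[ℂ] H) :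
    IsCgOrthonormalBasis μ (fun ω => (Λ ω).comp V) ↔
      ((ContinuousLinearMap.adjoint V).comp V = ContinuousLinearMap.id ℂ H ∧
        V.comp (ContinuousLinearMap.adjoint V) = ContinuousLinearMap.id ℂ H) := by
  obtain ⟨⟨hm, ho⟩, hP : CgParseval μ Λ⟩ := hΛ
  constructor
  · rintro ⟨⟨-, hoV⟩, hPV⟩
    have hVV : adjoint V ∘L V = ContinuousLinearMap.id ℂ H :=
      (norm_map_iff_adjoint_comp_self V).mp (hP.norm_map_of_comp hPV)
    have hinj : Function.Injective (adjoint V) := (injective_iff_map_eq_zero _).mpr fun x hx =>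
      hP.cgComplete x (hP.ae_apply_eq_zero_of_adjoint_eq_zero hoV hx)
    have hleft : Function.LeftInverse (adjoint V) V := DFunLike.congr_fun hVV
    exact ⟨hVV, ext (hleft.rightInverse_of_injective hinj)⟩
  · rintro ⟨hVV, hVV'⟩
    exact ⟨⟨hm.comp V, ho.comp_of_comp_adjoint_eq_id hVV'⟩,
      hP.comp ((norm_map_iff_adjoint_comp_self V).mpr hVV)⟩
end
end

section
/- Let (Ω, μ) be a σ-finite measure space, let Λ_ω : H → H_ω be bounded linear operators such that for all h, k ∈ H the function ω ↦ ⟨Λ_ω h, Λ_ω k⟩ is measurable, let κ be a countable index set, and for each ω ∈ Ω let (e_{ω,k})_{k∈κ} be a Hilbert (orthonormal) basis of H_ω. Define u_{ω,k} = Λ_ω*(e_{ω,k}) ∈ H. Then for 0 < A ≤ B, the family (Λ_ω)_{ω∈Ω} is a cg-frame for H with bounds A and B if and only if for every h ∈ H, A‖h‖² ≤ ∫_Ω ∑_{k∈κ} |⟨h, u_{ω,k}⟩|² dμ(ω) ≤ B‖h‖²; that is, (u_{ω,k})_{(ω,k)∈Ω×κ} is a continuous frame for H with respect to the product of μ with counting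 measure, with the same bounds. The same equivalence holds for the Bessel (upper bound only) and tight (A = B) cases. -/
open MeasureTheory

noncomputable section

variable {Ω : Type*} [MeasurableSpace Ω]
variable {H : Type*} [NormedAddCommGroup H] [InnerProductSpace ℂ H] [CompleteSpace H]
  [TopologicalSpace.SeparableSpace H]
variable {G : Ω → Type*} [∀ ω, NormedAddCommGroup (G ω)] [∀ ω, InnerProductSpace ℂ (G ω)]
  [∀ ω, CompleteSpace (G ω)]

open scoped InnerProductSpace

theorem HilbertBasis.tsum_norm_inner_sq {ι 𝕜 E : Type*} [RCLike 𝕜] [NormedAddCommGroup E]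
    [InnerProductSpace 𝕜 E] (b : HilbertBasis ι 𝕜 E) (x : E) :
    ∑' i, ‖⟪b i, x⟫_𝕜‖ ^ 2 = ‖x‖ ^ 2 := by
  have h := lp.norm_rpow_eq_tsum (p := 2) (by norm_num) (b.repr x)
  simp only [ENNReal.toReal_ofNat, Real.rpow_two, b.repr.norm_map, b.repr_apply_apply] at h
  exact h.symm

theorem HilbertBasis.tsum_norm_inner_adjoint_sq {ι 𝕜 E F : Type*} [RCLike 𝕜]
    [NormedAddCommGroup E] [InnerProductSpace 𝕜 E] [CompleteSpace E]
    [NormedAddCommGroup F] [InnerProductSpace 𝕜 F] [CompleteSpace F]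
    (b : HilbertBasis ι 𝕜 F) (T : E →L[𝕜] F) (x : E) :
    ∑' i, ‖⟪x, ContinuousLinearMap.adjoint T (b i)⟫_𝕜‖ ^ 2 = ‖T x‖ ^ 2 := by
  rw [← b.tsum_norm_inner_sq (T x)]
  refine tsum_congr fun i => ?_
  rw [ContinuousLinearMap.adjoint_inner_right, norm_inner_symm]

theorem stmt_8_general (μ : Measure Ω) (Λ : ∀ ω, H →L[ℂ] G ω)
    (hmeas : CgMeasurable μ Λ)
    (κ : Type*) (e : ∀ ω, HilbertBasis κ ℂ (G ω))
    (u : ∀ ω, κ → H) (hu : ∀ ω k, u ω k = ContinuousLinearMap.adjoint (Λ ω) (e ω k))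
    (A B : ℝ) :
    (IsCgFrameWith μ Λ A B ↔
      ∀ h : H, Integrable (fun ω => ∑' k : κ, ‖(inner ℂ h (u ω k) : ℂ)‖ ^ 2) μ ∧
        A * ‖h‖ ^ 2 ≤ ∫ ω, ∑' k : κ, ‖(inner ℂ h (u ω k) : ℂ)‖ ^ 2 ∂μ ∧
        ∫ ω, ∑' k : κ, ‖(inner ℂ h (u ω k) : ℂ)‖ ^ 2 ∂μ ≤ B * ‖h‖ ^ 2) ∧
    (IsCgBessel μ Λ B ↔
      ∀ h : H, Integrable (fun ω => ∑' k : κ, ‖(inner ℂ h (u ω k) : ℂ)‖ ^ 2) μ ∧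
        ∫ ω, ∑' k : κ, ‖(inner ℂ h (u ω k) : ℂ)‖ ^ 2 ∂μ ≤ B * ‖h‖ ^ 2) ∧
    (IsTightCgFrame μ Λ A ↔
      ∀ h : H, Integrable (fun ω => ∑' k : κ, ‖(inner ℂ h (u ω k) : ℂ)‖ ^ 2) μ ∧
        ∫ ω, ∑' k : κ, ‖(inner ℂ h (u ω k) : ℂ)‖ ^ 2 ∂μ = A * ‖h‖ ^ 2) := by
  have integrand_eq (h : H) :
      (fun ω => ∑' k : κ, ‖(inner ℂ h (u ω k) : ℂ)‖ ^ 2) = fun ω => ‖Λ ω h‖ ^ 2 := by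
    funext ω
    simp only [hu]
    exact (e ω).tsum_norm_inner_adjoint_sq (Λ ω) h
  simp only [integrand_eq]
  exact ⟨and_iff_right hmeas, and_iff_right hmeas, and_iff_right hmeas⟩

theorem stmt_8 (μ : Measure Ω) [SigmaFinite μ] (Λ : ∀ ω, H →L[ℂ] G ω)
    (hmeas : CgMeasurable μ Λ)
    (κ : Type*) [Countable κ] (e : ∀ ω, HilbertBasis κ ℂ (G ω))
    (u : ∀ ω, κ → H) (hu : ∀ ω k, u ω k = ContinuousLinearMap.adjoint (Λ ω) (e ω k))
    (A B : ℝ) (hA : 0 < A) (hAB : A ≤ B) :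
    (IsCgFrameWith μ Λ A B ↔
      ∀ h : H, Integrable (fun ω => ∑' k : κ, ‖(inner ℂ h (u ω k) : ℂ)‖ ^ 2) μ ∧
        A * ‖h‖ ^ 2 ≤ ∫ ω, ∑' k : κ, ‖(inner ℂ h (u ω k) : ℂ)‖ ^ 2 ∂μ ∧
        ∫ ω, ∑' k : κ, ‖(inner ℂ h (u ω k) : ℂ)‖ ^ 2 ∂μ ≤ B * ‖h‖ ^ 2) ∧
    (IsCgBessel μ Λ B ↔
      ∀ h : H, Integrable (fun ω => ∑' k : κ, ‖(inner ℂ h (u ω k) : ℂ)‖ ^ 2) μ ∧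
        ∫ ω, ∑' k : κ, ‖(inner ℂ h (u ω k) : ℂ)‖ ^ 2 ∂μ ≤ B * ‖h‖ ^ 2) ∧
    (IsTightCgFrame μ Λ A ↔
      ∀ h : H, Integrable (fun ω => ∑' k : κ, ‖(inner ℂ h (u ω k) : ℂ)‖ ^ 2) μ ∧
        ∫ ω, ∑' k : κ, ‖(inner ℂ h (u ω k) : ℂ)‖ ^ 2 ∂μ = A * ‖h‖ ^ 2) :=
  stmt_8_general μ Λ hmeas κ e u hu A B
end
end

section
/- Let (Λ_ω)_{ω∈Ω} be a cg-frame for H with bounds A and B, and let V ∈ B(H) be a bounded linear operator. Then (Λ_ω ∘ V)_{ω∈Ω} is a cg-frame for H (with some bounds) if and only if there exists a constant α > 0 such that ‖Vf‖² ≥ α‖f‖² for all f ∈ H. -/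
open MeasureTheory

noncomputable section

variable {Ω : Type*} [MeasurableSpace Ω]
variable {H : Type*} [NormedAddCommGroup H] [InnerProductSpace ℂ H] [CompleteSpace H]
  [TopologicalSpace.SeparableSpace H]
variable {G : Ω → Type*} [∀ ω, NormedAddCommGroup (G ω)] [∀ ω, InnerProductSpace ℂ (G ω)]
  [∀ ω, CompleteSpace (G ω)]

section

omit [CompleteSpace H] [TopologicalSpace.SeparableSpace H] [∀ ω, CompleteSpace (G ω)]

variable {μ : Measure Ω} {Λ : ∀ ω, H →L[ℂ] G ω} {A B : ℝ}

theorem IsCgFrameWith.isCgBessel (hΛ : IsCgFrameWith μ Λ A B) : IsCgBessel μ Λ B :=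
  ⟨hΛ.1, fun h => ⟨(hΛ.2 h).1, (hΛ.2 h).2.2⟩⟩

theorem IsCgFrameWith.mono_right {B' : ℝ} (hΛ : IsCgFrameWith μ Λ A B) (hB : B ≤ B') :
    IsCgFrameWith μ Λ A B' := by
  refine ⟨hΛ.1, fun h => ⟨(hΛ.2 h).1, (hΛ.2 h).2.1, ?_⟩⟩
  exact (hΛ.2 h).2.2.trans (by gcongr)

theorem IsCgFrameWith.isCgFrame (hΛ : IsCgFrameWith μ Λ A B) (hA : 0 < A) : IsCgFrame μ Λ :=
  ⟨A, max A B, hA, le_max_left A B, hΛ.mono_right (le_max_right A B)⟩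

theorem IsCgFrameWith.comp (hΛ : IsCgFrameWith μ Λ A B) (hA : 0 ≤ A) (hB : 0 ≤ B)
    {V : H →L[ℂ] H} {α : ℝ} (hV : ∀ f, α * ‖f‖ ^ 2 ≤ ‖V f‖ ^ 2) :
    IsCgFrameWith μ (fun ω => (Λ ω).comp V) (A * α) (B * ‖V‖ ^ 2) := by
  refine ⟨fun h k => hΛ.1 (V h) (V k), fun h => ?_⟩
  obtain ⟨hint, hlower, hupper⟩ := hΛ.2 (V h)
  refine ⟨hint, ?_, ?_⟩
  · calc A * α * ‖h‖ ^ 2 = A * (α * ‖h‖ ^ 2) := mul_assoc _ _ _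
      _ ≤ A * ‖V h‖ ^ 2 := by gcongr; exact hV h
      _ ≤ _ := hlower
  · calc ∫ ω, ‖(Λ ω).comp V h‖ ^ 2 ∂μ ≤ B * ‖V h‖ ^ 2 := hupper
      _ ≤ B * (‖V‖ * ‖h‖) ^ 2 := by gcongr; exact V.le_opNorm h
      _ = B * ‖V‖ ^ 2 * ‖h‖ ^ 2 := by ring

theorem IsCgBessel.exists_lower_bound_of_isCgFrame_comp (hΛ : IsCgBessel μ Λ B) (hB : 0 < B)
    {V : H →L[ℂ] H} (hΛV : IsCgFrame μ fun ω => (Λ ω).comp V) :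
    ∃ α : ℝ, 0 < α ∧ ∀ f : H, α * ‖f‖ ^ 2 ≤ ‖V f‖ ^ 2 := by
  obtain ⟨A', _, hA', -, -, hbounds⟩ := hΛV
  refine ⟨A' / B, div_pos hA' hB, fun f => ?_⟩
  rw [div_mul_eq_mul_div, div_le_iff₀ hB, mul_comm _ B]
  exact (hbounds f).2.1.trans (hΛ.2 (V f)).2

end

theorem stmt_9 (μ : Measure Ω) (Λ : ∀ ω, H →L[ℂ] G ω) (A B : ℝ)
    (hA : 0 < A) (hAB : A ≤ B) (hΛ : IsCgFrameWith μ Λ A B) (V : H →L[ℂ] H) :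
    IsCgFrame μ (fun ω => (Λ ω).comp V) ↔
      ∃ α : ℝ, 0 < α ∧ ∀ f : H, α * ‖f‖ ^ 2 ≤ ‖V f‖ ^ 2 := by
  have hB : 0 < B := hA.trans_le hAB
  refine ⟨hΛ.isCgBessel.exists_lower_bound_of_isCgFrame_comp hB, ?_⟩
  rintro ⟨α, hα, hV⟩
  exact (hΛ.comp hA.le hB.le hV).isCgFrame (by positivity)
end
end

section
/- Let (Λ_ω)_{ω∈Ω} be a cg-frame for H with bounds A and B, and let V ∈ B(H) be a bounded linear operator. Then (Λ_ω ∘ V)_{ω∈Ω} is a cg-frame for H (with some bounds) if and only if the adjoint V* is surjective. -/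
/-! Composing with `V` turns the frame inequalities for `Λ` at `V h` into frame inequalities for
`Λ ∘ V` at `h`, as long as `V` is bounded below; the lower frame bound of `Λ ∘ V` together with the
upper bound of `Λ` conversely forces `V` to be bounded below. It remains to see that `V` is bounded
below, `c ‖x‖² ≤ ‖V x‖²`, exactly when `V*` is onto. One way is the open mapping theorem for `V*`;
for the other, `V* V` is then injective with closed range and self-adjoint, hence onto. -/

open MeasureTheory

noncomputable section

variable {Ω : Type*} [MeasurableSpace Ω]
variable {H : Type*} [NormedAddCommGroup H] [InnerProductSpace ℂ H] [CompleteSpace H]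
  [TopologicalSpace.SeparableSpace H]
variable {G : Ω → Type*} [∀ ω, NormedAddCommGroup (G ω)] [∀ ω, InnerProductSpace ℂ (G ω)]
  [∀ ω, CompleteSpace (G ω)]

open scoped InnerProduct

namespace ContinuousLinearMap

variable {𝕜 E F : Type*} [RCLike 𝕜]
  [NormedAddCommGroup E] [InnerProductSpace 𝕜 E] [CompleteSpace E]
  [NormedAddCommGroup F] [InnerProductSpace 𝕜 F] [CompleteSpace F]

lemma surjective_adjoint_of_mul_sq_norm_le {V : E →L[𝕜] F} {c : ℝ} (hc : 0 < c)
    (hV : ∀ x, c * ‖x‖ ^ 2 ≤ ‖V x‖ ^ 2) : Function.Surjective (V†) := by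
  set T := V† ∘L V
  have hT : ∀ x, ‖x‖ ≤ c⁻¹ * ‖T x‖ := by
    intro x
    rw [inv_mul_eq_div, le_div_iff₀ hc]
    have hcT : c * ‖x‖ ^ 2 ≤ ‖T x‖ * ‖x‖ :=
      (hV x).trans ((V.apply_norm_sq_eq_inner_adjoint_left x).trans_le (re_inner_le_norm _ _))
    rcases (norm_nonneg x).eq_or_lt with hx | hx
    · rw [← hx, zero_mul]; exact norm_nonneg _
    · exact le_of_mul_le_mul_right (by nlinarith) hx
  have hT' : AntilipschitzWith ⟨c⁻¹, by positivity⟩ T := T.antilipschitz_of_bound hT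
  have hclosed : IsClosed (T.range : Set E) := hT'.isClosed_range T.uniformContinuous
  have hker : T.ker = ⊥ := LinearMap.ker_eq_bot_of_injective hT'.injective
  have hrange : T.range = ⊤ := by
    have := T.orthogonal_ker
    rwa [hker, Submodule.bot_orthogonal_eq_top, adjoint_comp, adjoint_adjoint,
      hclosed.submodule_topologicalClosure_eq, eq_comm] at this
  intro y
  obtain ⟨x, hx⟩ := LinearMap.range_eq_top.mp hrange y
  exact ⟨V x, hx⟩

lemma exists_pos_mul_sq_norm_le_of_surjective_adjoint {V : E →L[𝕜] F}
    (hs : Function.Surjective (V†)) : ∃ c > 0, ∀ x, c * ‖x‖ ^ 2 ≤ ‖V x‖ ^ 2 := by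
  obtain ⟨C, hC, hpre⟩ := (V†).exists_preimage_norm_le hs
  refine ⟨(C ^ 2)⁻¹, by positivity, fun x => ?_⟩
  obtain ⟨y, hyx, hy⟩ := hpre x
  have hx : ‖x‖ ^ 2 ≤ C * ‖x‖ * ‖V x‖ :=
    calc ‖x‖ ^ 2 = RCLike.re (inner 𝕜 ((V†) y) x) := by rw [hyx, inner_self_eq_norm_sq]
      _ = RCLike.re (inner 𝕜 y (V x)) := by rw [adjoint_inner_left]
      _ ≤ ‖y‖ * ‖V x‖ := re_inner_le_norm _ _
      _ ≤ C * ‖x‖ * ‖V x‖ := by gcongr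
  have hx' : ‖x‖ ≤ C * ‖V x‖ := by
    rcases (norm_nonneg x).eq_or_lt with h0 | h0
    · rw [← h0]; positivity
    · nlinarith
  rw [inv_mul_eq_div, div_le_iff₀' (by positivity), ← mul_pow]
  gcongr

theorem surjective_adjoint_iff_exists_pos_mul_sq_norm_le (V : E →L[𝕜] F) :
    Function.Surjective (V†) ↔ ∃ c > 0, ∀ x, c * ‖x‖ ^ 2 ≤ ‖V x‖ ^ 2 :=
  ⟨exists_pos_mul_sq_norm_le_of_surjective_adjoint,
    fun ⟨_, hc, hV⟩ => surjective_adjoint_of_mul_sq_norm_le hc hV⟩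

end ContinuousLinearMap

namespace IsCgFrameWith

omit [CompleteSpace H] [TopologicalSpace.SeparableSpace H] [∀ ω, CompleteSpace (G ω)]

variable {E : Type*} [NormedAddCommGroup E] [InnerProductSpace ℂ E]
  {μ : Measure Ω} {Λ : ∀ ω, H →L[ℂ] G ω} {A B : ℝ}

lemma isCgFrame_s10 (hΛ : IsCgFrameWith μ Λ A B) (hA : 0 < A) : IsCgFrame μ Λ :=
  ⟨A, max A B, hA, le_max_left A B, hΛ.1, fun h =>
    ⟨(hΛ.2 h).1, (hΛ.2 h).2.1, (hΛ.2 h).2.2.trans (by gcongr; exact le_max_right A B)⟩⟩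

lemma comp_of_mul_sq_norm_le (hΛ : IsCgFrameWith μ Λ A B) (hA : 0 ≤ A) (hB : 0 ≤ B)
    {V : E →L[ℂ] H} {c : ℝ} (hV : ∀ x, c * ‖x‖ ^ 2 ≤ ‖V x‖ ^ 2) :
    IsCgFrameWith μ (fun ω => (Λ ω).comp V) (A * c) (B * ‖V‖ ^ 2) := by
  refine ⟨fun h k => hΛ.1 (V h) (V k), fun x => ?_⟩
  obtain ⟨hint, hlow, hup⟩ := hΛ.2 (V x)
  refine ⟨hint, ?_, ?_⟩
  · calc A * c * ‖x‖ ^ 2 = A * (c * ‖x‖ ^ 2) := mul_assoc _ _ _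
      _ ≤ A * ‖V x‖ ^ 2 := by gcongr; exact hV x
      _ ≤ _ := hlow
  · calc _ ≤ B * ‖V x‖ ^ 2 := hup
      _ ≤ B * (‖V‖ * ‖x‖) ^ 2 := by gcongr; exact V.le_opNorm x
      _ = B * ‖V‖ ^ 2 * ‖x‖ ^ 2 := by ring

lemma exists_pos_mul_sq_norm_le_of_isCgFrame_comp (hΛ : IsCgFrameWith μ Λ A B) (hB : 0 < B)
    {V : E →L[ℂ] H} (hΛV : IsCgFrame μ (fun ω => (Λ ω).comp V)) :
    ∃ c > 0, ∀ x, c * ‖x‖ ^ 2 ≤ ‖V x‖ ^ 2 := by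
  obtain ⟨A', B', hA', -, hframe⟩ := hΛV
  refine ⟨A' / B, div_pos hA' hB, fun x => ?_⟩
  rw [div_mul_eq_mul_div, div_le_iff₀' hB]
  exact (hframe.2 x).2.1.trans (hΛ.2 (V x)).2.2

end IsCgFrameWith

theorem stmt_10 (μ : Measure Ω) (Λ : ∀ ω, H →L[ℂ] G ω) (A B : ℝ)
    (hA : 0 < A) (hAB : A ≤ B) (hΛ : IsCgFrameWith μ Λ A B) (V : H →L[ℂ] H) :
    IsCgFrame μ (fun ω => (Λ ω).comp V) ↔
      Function.Surjective ⇑(ContinuousLinearMap.adjoint V) := by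
  have hB : 0 < B := hA.trans_le hAB
  rw [V.surjective_adjoint_iff_exists_pos_mul_sq_norm_le]
  refine ⟨hΛ.exists_pos_mul_sq_norm_le_of_isCgFrame_comp hB, fun ⟨c, hc, hV⟩ => ?_⟩
  exact (hΛ.comp_of_mul_sq_norm_le hA.le hB.le hV).isCgFrame_s10 (mul_pos hA hc)
end
end
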